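/- Let δ > 0, 1 < q < ∞, 1/2 ≤ μ < 1, and let α, γ be real numbers with α + γ > 0 and 1 − (α+γ)q − μ > 0. Let u(t) = t^{−(α+γ)} for t ∈ (0,δ) and u(t) = 0 otherwise. Then u has finite local one-sided weighted Morrey norm with weight |x|^{−1/2}: ‖u‖_{L^{q,μ}_+((0,δ),|x|^{−1/2})} = sup_{0≤x0≤δ, 0<h≤δ} ( (h^{μ−1} ∫_{x0−h}^{x0} |x|^{−1/2} dx)^{−1} ∫_{(x0,x0+h)∩(0,δ)} |u(t)|^q dt )^{1/q} < ∞. -/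

import Mathlib

open MeasureTheory
open scoped ENNReal

/-- `Φ⁺_{v,μ,1}(x0,h) = h^{μ−1} ∫_{x0−h}^{x0} v`. -/
noncomputable def Phi (v : ℝ → ℝ) (lam θ x0 h : ℝ) : ℝ :=
  h ^ (lam - 1) * ∫ y in (x0 - h)..x0, (v y) ^ θ

/-- The local one-sided weighted Morrey norm `‖u‖_{L^{q,μ}_+((0,δ),v)}`. -/
noncomputable def morreyLocal (T : ℝ) (v : ℝ → ℝ) (p lam θ : ℝ) (u : ℝ → ℝ) : ℝ≥0∞ :=
  ⨆ x0 ∈ Set.Icc (0:ℝ) T, ⨆ h ∈ Set.Ioc (0:ℝ) T,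
    ((∫⁻ y in Set.Ioo x0 (x0 + h) ∩ Set.Ioo 0 T, ENNReal.ofReal (|u y| ^ p)) /
      ENNReal.ofReal (Phi v lam θ x0 h)) ^ (1 / p)

/-! With `β = (α + γ) q ∈ [0, 1)`, the numerator over `(x0, x0 + h)` is at most
`∫_{x0}^{x0+h} t^{-β} dt ≤ h^{1-β} / (1 - β)` by subadditivity of `t ↦ t^{1-β}`, while
`|x|^{-1/2} ≥ δ^{-1/2}` on `[x0 - h, x0] ⊆ [-δ, δ]` gives `Φ(x0, h) ≥ h^μ δ^{-1/2}`.
The quotient is then at most `δ^{1/2} h^{1-β-μ} / (1 - β) ≤ δ^{3/2-β-μ} / (1 - β)`,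
because `1 - β - μ > 0`. -/

open Set

theorem intervalIntegrable_abs_rpow {r : ℝ} (hr : -1 < r) (a b : ℝ) :
    IntervalIntegrable (fun x : ℝ => |x| ^ r) volume a b := by
  have hnonneg : ∀ c, 0 ≤ c → IntervalIntegrable (fun x : ℝ => |x| ^ r) volume 0 c :=
    fun c hc => (intervalIntegral.intervalIntegrable_rpow' hr).congr fun x hx => by
      rw [uIoc_of_le hc] at hx
      simp only [abs_of_pos hx.1]
  have hall : ∀ c, IntervalIntegrable (fun x : ℝ => |x| ^ r) volume 0 c := by
    intro c
    rcases le_total 0 c with hc | hc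
    · exact hnonneg c hc
    · simpa using (IntervalIntegrable.iff_comp_neg (by simp)).mp (hnonneg (-c) (by linarith))
  exact (hall a).symm.trans (hall b)

theorem mul_rpow_le_integral_abs_rpow {r R a b : ℝ} (hr0 : r ≤ 0) (hr : -1 < r) (hab : a ≤ b)
    (ha : -R ≤ a) (hb : b ≤ R) :
    (b - a) * R ^ r ≤ ∫ x in a..b, |x| ^ r := by
  rw [← smul_eq_mul, ← intervalIntegral.integral_const]
  refine intervalIntegral.integral_mono_ae_restrict hab intervalIntegrable_const
    (intervalIntegrable_abs_rpow hr a b) ?_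
  filter_upwards [ae_restrict_mem measurableSet_Icc, Measure.ae_ne _ 0] with x hx hx0
  exact Real.rpow_le_rpow_of_nonpos (abs_pos.mpr hx0)
    (abs_le.mpr ⟨by linarith [hx.1], by linarith [hx.2]⟩) hr0

theorem rpow_mul_rpow_le_Phi_abs_rpow {r R lam x0 h : ℝ} (hr0 : r ≤ 0) (hr : -1 < r)
    (hh : 0 < h) (hlo : -R ≤ x0 - h) (hhi : x0 ≤ R) :
    h ^ lam * R ^ r ≤ Phi (fun x => |x| ^ r) lam 1 x0 h := by
  have hI := mul_rpow_le_integral_abs_rpow hr0 hr (by linarith) hlo hhi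
  rw [sub_sub_cancel] at hI
  calc h ^ lam * R ^ r = h ^ (lam - 1) * (h * R ^ r) := by
        rw [← mul_assoc, ← Real.rpow_add_one hh.ne', sub_add_cancel]
    _ ≤ Phi (fun x => |x| ^ r) lam 1 x0 h := by
        simp only [Phi, Real.rpow_one]
        gcongr

theorem setLIntegral_Ioo_rpow_neg_le {β x h : ℝ} (hβ0 : 0 ≤ β) (hβ1 : β < 1) (hx : 0 ≤ x)
    (hh : 0 ≤ h) :
    ∫⁻ y in Ioo x (x + h), ENNReal.ofReal (y ^ (-β)) ≤
      ENNReal.ofReal (h ^ (1 - β) / (1 - β)) := by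
  have hint : IntervalIntegrable (fun y : ℝ => y ^ (-β)) volume x (x + h) :=
    intervalIntegral.intervalIntegrable_rpow' (by linarith)
  rw [intervalIntegrable_iff_integrableOn_Ioo_of_le (by linarith)] at hint
  rw [← ofReal_integral_eq_lintegral_ofReal hint, ← integral_Ioc_eq_integral_Ioo,
    ← intervalIntegral.integral_of_le (by linarith), integral_rpow (.inl (by linarith)),
    neg_add_eq_sub]
  · refine ENNReal.ofReal_le_ofReal (div_le_div_of_nonneg_right ?_ (by linarith))
    linarith [Real.rpow_add_le_add_rpow hx hh (by linarith : 0 ≤ 1 - β) (by linarith)]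
  · filter_upwards [ae_restrict_mem measurableSet_Ioo] with y hy
    exact Real.rpow_nonneg (hx.trans hy.1.le) _

theorem setLIntegral_abs_indicator_rpow_le {T s q x h : ℝ} (hsq0 : 0 ≤ s * q) (hsq1 : s * q < 1)
    (hx : 0 ≤ x) (hh : 0 ≤ h) :
    ∫⁻ y in Ioo x (x + h) ∩ Ioo 0 T,
        ENNReal.ofReal (|(Ioo 0 T).indicator (fun t => t ^ (-s)) y| ^ q) ≤
      ENNReal.ofReal (h ^ (1 - s * q) / (1 - s * q)) := by
  calc _ = ∫⁻ y in Ioo x (x + h) ∩ Ioo 0 T, ENNReal.ofReal (y ^ (-(s * q))) := by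
        refine setLIntegral_congr_fun (measurableSet_Ioo.inter measurableSet_Ioo) fun y hy => ?_
        rw [indicator_of_mem hy.2, abs_of_nonneg (Real.rpow_nonneg hy.2.1.le _),
          ← Real.rpow_mul hy.2.1.le, neg_mul]
    _ ≤ ∫⁻ y in Ioo x (x + h), ENNReal.ofReal (y ^ (-(s * q))) :=
        lintegral_mono_set inter_subset_left
    _ ≤ _ := setLIntegral_Ioo_rpow_neg_le hsq0 hsq1 hx hh

theorem morreyLocal_le_of_le_mul_Phi {T p lam θ : ℝ} {v u : ℝ → ℝ} {C : ℝ≥0∞} (hp : 0 ≤ p)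
    (hbound : ∀ x0 ∈ Icc 0 T, ∀ h ∈ Ioc 0 T,
      ∫⁻ y in Ioo x0 (x0 + h) ∩ Ioo 0 T, ENNReal.ofReal (|u y| ^ p) ≤
        C * ENNReal.ofReal (Phi v lam θ x0 h)) :
    morreyLocal T v p lam θ u ≤ C ^ (1 / p) :=
  iSup₂_le fun x0 hx0 => iSup₂_le fun h hh =>
    ENNReal.rpow_le_rpow (ENNReal.div_le_of_le_mul (hbound x0 hx0 h hh)) (by positivity)

theorem rpow_le_rpow_sub_mul_rpow {h R p μ : ℝ} (hh : 0 < h) (hR : h ≤ R) (hμ : μ ≤ p) :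
    h ^ p ≤ R ^ (p - μ) * h ^ μ := by
  rw [← sub_add_cancel p μ, Real.rpow_add hh, add_sub_cancel_right]
  gcongr

theorem power_function_in_morrey_general (δ q μ α γ : ℝ) (hδ : 0 < δ)
    (hq : 1 < q) (hμ0 : 1 / 2 ≤ μ)
    (hαγ : 0 < α + γ) (hexp : 0 < 1 - (α + γ) * q - μ) :
    morreyLocal δ (fun x => |x| ^ (-(1 / 2) : ℝ)) q μ 1
      (Set.indicator (Set.Ioo 0 δ) (fun t => t ^ (-(α + γ)))) < ⊤ := by
  set β := (α + γ) * q
  have hβ0 : 0 ≤ β := mul_nonneg hαγ.le (by linarith)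
  have hβ1 : 0 < 1 - β := by linarith
  set C := δ ^ (1 - β - μ) / (1 - β) / δ ^ (-(1 / 2) : ℝ)
  refine (morreyLocal_le_of_le_mul_Phi (C := ENNReal.ofReal C) (by linarith)
    fun x0 hx0 h hh => ?_).trans_lt
      (ENNReal.rpow_lt_top_of_nonneg (by positivity) ENNReal.ofReal_ne_top)
  have hPhi : h ^ μ * δ ^ (-(1 / 2) : ℝ) ≤ Phi (fun x => |x| ^ (-(1 / 2) : ℝ)) μ 1 x0 h :=
    rpow_mul_rpow_le_Phi_abs_rpow (by norm_num) (by norm_num) hh.1 (by linarith [hx0.1, hh.2])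
      hx0.2
  have hreal : h ^ (1 - β) / (1 - β) ≤ C * (h ^ μ * δ ^ (-(1 / 2) : ℝ)) := by
    calc h ^ (1 - β) / (1 - β) ≤ δ ^ (1 - β - μ) * h ^ μ / (1 - β) := by
          gcongr
          exact rpow_le_rpow_sub_mul_rpow hh.1 hh.2 (by linarith)
      _ = C * (h ^ μ * δ ^ (-(1 / 2) : ℝ)) := by
          simp only [C]
          field_simp
  calc _ ≤ ENNReal.ofReal (h ^ (1 - β) / (1 - β)) :=
        setLIntegral_abs_indicator_rpow_le hβ0 (by linarith) hx0.1 hh.1.le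
    _ ≤ ENNReal.ofReal (C * Phi (fun x => |x| ^ (-(1 / 2) : ℝ)) μ 1 x0 h) :=
        ENNReal.ofReal_le_ofReal (hreal.trans (by gcongr))
    _ = _ := ENNReal.ofReal_mul (by positivity)

/-- The function `u(t) = t^{−(α+γ)}` on `(0,δ)` has finite
`L^{q,μ}_+((0,δ),|x|^{−1/2})` norm when `1 − (α+γ)q − μ > 0` and `1/2 ≤ μ < 1`. -/
theorem power_function_in_morrey (δ q μ α γ : ℝ) (hδ : 0 < δ)
    (hq : 1 < q) (hμ0 : 1 / 2 ≤ μ) (hμ1 : μ < 1)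
    (hαγ : 0 < α + γ) (hexp : 0 < 1 - (α + γ) * q - μ) :
    morreyLocal δ (fun x => |x| ^ (-(1 / 2) : ℝ)) q μ 1
      (Set.indicator (Set.Ioo 0 δ) (fun t => t ^ (-(α + γ)))) < ⊤ :=
  power_function_in_morrey_general δ q μ α γ hδ hq hμ0 hαγ hexp
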